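/- For n ≥ 1, the sequence σmex̄(n) is weakly increasing: σmex̄(n) ≤ σmex̄(n+1). -/

import Mathlib

/-- An overpartition of `n`: a multiset of non-overlined positive parts together with a
finite set of overlined positive parts (at most one overlined copy per part size). -/
structure Overpartition (n : ℕ) where
  parts : Multiset ℕ              -- non-overlined parts
  overlined : Finset ℕ            -- overlined parts (distinct sizes)
  parts_pos : ∀ i ∈ parts, 0 < i
  overlined_pos : ∀ i ∈ overlined, 0 < i
  sum_eq : parts.sum + ∑ i ∈ overlined, i = n

/-- Minimal excludant of an overpartition: the least positive integer not among
the non-overlined parts. -/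
noncomputable def Overpartition.mex {n : ℕ} (π : Overpartition n) : ℕ :=
  sInf {m : ℕ | 0 < m ∧ m ∉ π.parts}

/-- Least `r`-gap: the least positive integer occurring fewer than `r` times among
the non-overlined parts. -/
noncomputable def Overpartition.rgap {n : ℕ} (r : ℕ) (π : Overpartition n) : ℕ :=
  sInf {m : ℕ | 0 < m ∧ π.parts.count m < r}

/-- `σmex̄(n)`: sum of minimal excludants over all overpartitions of `n`. -/
noncomputable def sigmaMex (n : ℕ) : ℕ := ∑ᶠ π : Overpartition n, π.mex

/-- `σ_r mex̄(n)`: sum of least `r`-gaps over all overpartitions of `n`. -/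
noncomputable def sigmaRMex (r n : ℕ) : ℕ := ∑ᶠ π : Overpartition n, π.rgap r

/-- `p̄(n)`: the number of overpartitions of `n`. -/
noncomputable def pbar (n : ℕ) : ℕ := Nat.card (Overpartition n)

/-!
Adding a part `1` maps the overpartitions of `n` injectively into those of `n + 1`, and it can
only enlarge the minimal excludant, since it removes `1` from the candidates for the mex and
leaves the other candidates alone. Summing the mex over the image gives the inequality.
-/

open Function

theorem finsum_le_finsum_of_injective {α β M : Type*} [AddCommMonoid M] [PartialOrder M]
    [CanonicallyOrderedAdd M] [IsOrderedAddMonoid M] [Finite β] {f : α → M} {g : β → M}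
    {e : α → β} (he : Injective e) (h : ∀ a, f a ≤ g (e a)) : ∑ᶠ a, f a ≤ ∑ᶠ b, g b := by
  classical
  have : Finite α := Finite.of_injective e he
  have := Fintype.ofFinite α
  have := Fintype.ofFinite β
  rw [finsum_eq_sum_of_fintype, finsum_eq_sum_of_fintype]
  calc ∑ a, f a ≤ ∑ a, g (e a) := Finset.sum_le_sum fun a _ => h a
    _ = ∑ b ∈ Finset.univ.map ⟨e, he⟩, g b := (Finset.sum_map Finset.univ ⟨e, he⟩ g).symm
    _ ≤ ∑ b, g b := Finset.sum_le_sum_of_subset (Finset.subset_univ _)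

attribute [ext] Overpartition

namespace Overpartition

variable {n : ℕ}

theorem parts_sum_le (π : Overpartition n) : π.parts.sum ≤ n := by
  have := π.sum_eq
  omega

theorem overlined_subset_range (π : Overpartition n) : π.overlined ⊆ Finset.range (n + 1) := by
  intro i hi
  have := π.sum_eq
  have := Finset.single_le_sum (fun j _ => Nat.zero_le j) hi
  rw [Finset.mem_range]
  omega

def toPartition (π : Overpartition n) : n.Partition where
  parts := π.parts + π.overlined.val
  parts_pos {i} hi := (Multiset.mem_add.1 hi).elim (π.parts_pos i) (π.overlined_pos i)
  parts_sum := by rw [Multiset.sum_add, Finset.sum_val]; exact π.sum_eq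

def overlinedSubset (π : Overpartition n) : (Finset.range (n + 1)).powerset :=
  ⟨π.overlined, Finset.mem_powerset.2 π.overlined_subset_range⟩

theorem injective_toPartition_overlinedSubset :
    Injective fun π : Overpartition n => (π.toPartition, π.overlinedSubset) := by
  intro π ρ h
  simp only [Prod.mk.injEq, Nat.Partition.ext_iff, toPartition, overlinedSubset,
    Subtype.mk.injEq] at h
  obtain ⟨hparts, hoverlined⟩ := h
  rw [hoverlined] at hparts
  exact Overpartition.ext (add_left_injective _ hparts) hoverlined

instance : Finite (Overpartition n) :=
  Finite.of_injective _ injective_toPartition_overlinedSubset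

def consOne (π : Overpartition n) : Overpartition (n + 1) where
  parts := 1 ::ₘ π.parts
  overlined := π.overlined
  parts_pos i hi := (Multiset.mem_cons.1 hi).elim (fun h => h ▸ Nat.one_pos) (π.parts_pos i)
  overlined_pos := π.overlined_pos
  sum_eq := by
    have := π.sum_eq
    rw [Multiset.sum_cons]
    omega

theorem consOne_injective : Injective (consOne (n := n)) := fun _ _ h =>
  Overpartition.ext ((Multiset.cons_inj_right 1).1 (congrArg parts h)) (congrArg overlined h :)

theorem succ_notMem_parts (π : Overpartition n) : n + 1 ∉ π.parts := fun h =>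
  (Multiset.le_sum_of_mem h).not_gt (Nat.lt_succ_of_le π.parts_sum_le)

theorem mex_le_mex_of_parts_le {m : ℕ} {π : Overpartition n} {ρ : Overpartition m}
    (h : π.parts ≤ ρ.parts) : π.mex ≤ ρ.mex :=
  csInf_le_csInf' ⟨m + 1, m.succ_pos, ρ.succ_notMem_parts⟩
    fun _ ⟨hpos, hρ⟩ => ⟨hpos, fun hπ => hρ (Multiset.mem_of_le h hπ)⟩

theorem mex_le_mex_consOne (π : Overpartition n) : π.mex ≤ π.consOne.mex :=
  mex_le_mex_of_parts_le (Multiset.le_cons_self _ _)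

end Overpartition

theorem stmt10_general (n : ℕ) : sigmaMex n ≤ sigmaMex (n + 1) :=
  finsum_le_finsum_of_injective Overpartition.consOne_injective
    Overpartition.mex_le_mex_consOne

/-- σmex̄ is weakly increasing for n ≥ 1. -/
theorem stmt10 (n : ℕ) (hn : 1 ≤ n) : sigmaMex n ≤ sigmaMex (n + 1) :=
  stmt10_general n
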